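/- arXiv:2310.11587 — 7 statements merged into one kernel-verified Lean document; each statement's English description precedes it below -/
import Mathlib

section
/- Let f_1, …, f_t ∈ R = MvPolynomial (Fin N) ℂ, let I = Ideal.span {f_1, …, f_t}, let y ∈ ℂ^N, and let ∂ : R →ₗ[ℂ] ℂ be an element of the Macaulay dual space D_y at y, i.e. ∂(f) = λ_p(τ_y f) for some polynomial p ∈ R, where τ_y : R →ₐ[ℂ] R is the shift substitution x_i ↦ x_i + y_i. Then ∂ vanishes on I if and only if ∂(f_i) = 0 for all 1 ≤ i ≤ t and, for every 1 ≤ j ≤ N, the functional Φ_j(∂) : f ↦ ∂((x_j − y_j)·f) vanishes on I. -/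
open MvPolynomial

/-- The Macaulay pairing `λ_p(f) = ∑_α coeff(α,p) * coeff(α,f)`, as a linear functional. -/
noncomputable def lam {N : ℕ} (p : MvPolynomial (Fin N) ℂ) :
    MvPolynomial (Fin N) ℂ →ₗ[ℂ] ℂ where
  toFun f := ∑ α ∈ p.support, coeff α p * coeff α f
  map_add' f g := by simp [mul_add, Finset.sum_add_distrib]
  map_smul' c f := by
    simp [MvPolynomial.coeff_smul, Finset.mul_sum, mul_left_comm]

/-- **Closedness subspace condition** (Prop. 2.1): for `I = ⟨f₁,…,f_t⟩`, `y ∈ ℂᴺ`, and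
`∂ ∈ D_y` given by `∂(f) = λ_p(τ_y f)` where `τ_y : x_i ↦ x_i + y_i`, the functional `∂`
vanishes on `I` iff `∂(f_i) = 0` for every `i` and each `Φ_j(∂) : f ↦ ∂((x_j - y_j)·f)`
vanishes on `I`. -/
theorem closedness_subspace_condition {N t : ℕ}
    (f : Fin t → MvPolynomial (Fin N) ℂ) (y : Fin N → ℂ)
    (I : Ideal (MvPolynomial (Fin N) ℂ)) (hI : I = Ideal.span (Set.range f))
    (τ : MvPolynomial (Fin N) ℂ →ₐ[ℂ] MvPolynomial (Fin N) ℂ)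
    (hτ : τ = aeval (fun i => X i + C (y i)))
    (p : MvPolynomial (Fin N) ℂ)
    (D : MvPolynomial (Fin N) ℂ → ℂ) (hD : ∀ g, D g = lam p (τ g)) :
    (∀ g ∈ I, D g = 0) ↔
      ((∀ i : Fin t, D (f i) = 0) ∧
        ∀ j : Fin N, ∀ g ∈ I, D ((X j - C (y j)) * g) = 0) := by
  have hadd : ∀ a b, D (a + b) = D a + D b := by
    intro a b; simp [hD, map_add]
  have hsmul : ∀ (c : ℂ) a, D (C c * a) = c * D a := by
    intro c a
    simp only [hD, ← smul_eq_C_mul, map_smul, smul_eq_mul]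
  constructor
  · intro h
    refine ⟨fun i => h (f i) ?_, fun j g hg => h _ (I.mul_mem_left _ hg)⟩
    rw [hI]; exact Ideal.subset_span ⟨i, rfl⟩
  · rintro ⟨h1, h2⟩ g hg
    have key : ∀ r : MvPolynomial (Fin N) ℂ, ∀ g, g ∈ I → D g = 0 → D (r * g) = 0 := by
      intro r
      induction r using MvPolynomial.induction_on with
      | C c => intro g hg hDg; rw [hsmul, hDg, mul_zero]
      | add a b ha hb =>
        intro g hg hDg
        rw [add_mul, hadd, ha g hg hDg, hb g hg hDg, add_zero]
      | mul_X a j ha =>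
        intro g hg hDg
        have hXg : X j * g ∈ I := I.mul_mem_left _ hg
        have hDXg : D (X j * g) = 0 := by
          have e : X j * g = (X j - C (y j)) * g + C (y j) * g := by ring
          rw [e, hadd, h2 j g hg, hsmul, hDg, mul_zero, add_zero]
        rw [mul_assoc]
        exact ha (X j * g) hXg hDXg
    subst hI
    induction hg using Submodule.span_induction with
    | mem x hx =>
      obtain ⟨i, rfl⟩ := hx
      exact h1 i
    | zero => simp [hD, map_zero]
    | add x z hx hz hDx hDz => rw [hadd, hDx, hDz, add_zero]
    | smul c x hx hDx => exact key c x hx hDx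
end

section
/- Let I ⊆ R = MvPolynomial (Fin N) ℂ be an M-graded ideal and let p ∈ R be such that λ_p vanishes on I (i.e. λ_p ∈ D_0(I)). Then for every m ∈ M, the functional λ_{p_m} also vanishes on I, where p_m = MvPolynomial.weightedHomogeneousComponent w m p is the degree-m weighted homogeneous component of p. In other words, the Macaulay dual space D_0(I) inherits the M-grading: D_0(I) = ⊕_{m ∈ M} D_0^m(I). -/
open MvPolynomial

/-- An ideal is `M`-graded if it is generated by a set of `M`-homogeneous polynomials. -/
def IsMGraded {N : ℕ} {M : Type*} [AddCommGroup M] (w : Fin N → M)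
    (I : Ideal (MvPolynomial (Fin N) ℂ)) : Prop :=
  ∃ S : Set (MvPolynomial (Fin N) ℂ),
    (∀ s ∈ S, ∃ m : M, s.IsWeightedHomogeneous w m) ∧ I = Ideal.span S

lemma lam_component {N : ℕ} {M : Type*} [AddCommMonoid M] (w : Fin N → M) (m : M)
    (p f : MvPolynomial (Fin N) ℂ) :
    lam (weightedHomogeneousComponent w m p) f = lam p (weightedHomogeneousComponent w m f) := by
  classical
  show ∑ α ∈ (weightedHomogeneousComponent w m p).support,
      coeff α (weightedHomogeneousComponent w m p) * coeff α f
    = ∑ α ∈ p.support, coeff α p * coeff α (weightedHomogeneousComponent w m f)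
  have hsub : (weightedHomogeneousComponent w m p).support ⊆ p.support := by
    intro α hα
    simp only [mem_support_iff, coeff_weightedHomogeneousComponent] at hα ⊢
    intro h
    apply hα
    split
    · exact h
    · rfl
  rw [Finset.sum_subset hsub]
  · apply Finset.sum_congr rfl
    intro α _
    simp only [coeff_weightedHomogeneousComponent]
    split <;> simp
  · intro α _ hα
    simp only [mem_support_iff, not_not] at hα
    rw [hα, zero_mul]

lemma component_mem {N : ℕ} {M : Type*} [AddCommGroup M] (w : Fin N → M)
    (I : Ideal (MvPolynomial (Fin N) ℂ)) (hI : IsMGraded w I)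
    (f : MvPolynomial (Fin N) ℂ) (hf : f ∈ I) (m : M) :
    weightedHomogeneousComponent w m f ∈ I := by
  classical
  letI : GradedAlgebra (weightedHomogeneousSubmodule ℂ w) := weightedGradedAlgebra ℂ w
  obtain ⟨S, hS, rfl⟩ := hI
  have hhom : (Ideal.span S).IsHomogeneous (weightedHomogeneousSubmodule ℂ w) := by
    apply Ideal.homogeneous_span
    intro x hx
    obtain ⟨n, hn⟩ := hS x hx
    exact ⟨n, (mem_weightedHomogeneousSubmodule ℂ w n x).mpr hn⟩
  have := hhom m hf
  have heq : (↑(DirectSum.decompose (weightedHomogeneousSubmodule ℂ w) f m) :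
      MvPolynomial (Fin N) ℂ) = weightedHomogeneousComponent w m f :=
    MvPolynomial.decompose'_apply ℂ w f m
  rwa [heq] at this

/-- **Thm. 3.1**: the Macaulay dual space of an `M`-graded ideal inherits the `M`-grading:
if `λ_p ∈ D_0(I)` then each weighted homogeneous component `p_m` of `p` satisfies
`λ_{p_m} ∈ D_0(I)`, i.e. `D_0(I) = ⊕_{m ∈ M} D_0^m(I)`. -/
theorem dualSpace_inherits_grading {N : ℕ} {M : Type*} [AddCommGroup M] (w : Fin N → M)
    (I : Ideal (MvPolynomial (Fin N) ℂ)) (hI : IsMGraded w I)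
    (p : MvPolynomial (Fin N) ℂ) (hp : ∀ f ∈ I, lam p f = 0) :
    ∀ m : M, ∀ f ∈ I, lam (weightedHomogeneousComponent w m p) f = 0 := by
  intro m f hf
  rw [lam_component]
  exact hp _ (component_mem w I hI f hf m)
end

section
/- Suppose the M-grading of R = MvPolynomial (Fin N) ℂ is pointed and let I ⊆ R be an M-graded ideal. Then for every m ∈ M, the multi-graded Hilbert function of I equals the dimension of the degree-m Macaulay dual space: dim_ℂ(R_m) − dim_ℂ(R_m ∩ I) = dim_ℂ D_0^m(I), where R_m = weightedHomogeneousSubmodule w m, R_m ∩ I is the intersection of R_m with I viewed as a ℂ-subspace, and D_0^m(I) = {p ∈ R_m : λ_p(f) = 0 for all f ∈ I}. -/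
open MvPolynomial

lemma lam_comm {N : ℕ} (p f : MvPolynomial (Fin N) ℂ) : lam p f = lam f p := by
  have h1 : (lam p) f = ∑ α ∈ p.support ∪ f.support, coeff α p * coeff α f := by
    show ∑ α ∈ p.support, coeff α p * coeff α f = _
    exact Finset.sum_subset Finset.subset_union_left
      (fun α _ h => by simp [MvPolynomial.notMem_support_iff.mp h])
  have h2 : (lam f) p = ∑ α ∈ p.support ∪ f.support, coeff α f * coeff α p := by
    show ∑ α ∈ f.support, coeff α f * coeff α p = _
    exact Finset.sum_subset Finset.subset_union_right
      (fun α _ h => by simp [MvPolynomial.notMem_support_iff.mp h])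
  rw [h1, h2]
  exact Finset.sum_congr rfl (fun α _ => mul_comm _ _)

/-- The subspace of polynomials `p` whose functional `λ_p` vanishes on the ideal `I`. -/
noncomputable def vanishSub {N : ℕ} (I : Ideal (MvPolynomial (Fin N) ℂ)) :
    Submodule ℂ (MvPolynomial (Fin N) ℂ) where
  carrier := {p | ∀ f ∈ I, lam p f = 0}
  zero_mem' := by
    intro f _
    rw [lam_comm]
    exact map_zero (lam f)
  add_mem' := by
    intro a b ha hb f hf
    rw [lam_comm, map_add, ← lam_comm a f, ← lam_comm b f, ha f hf, hb f hf, add_zero]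
  smul_mem' := by
    intro c a ha f hf
    rw [lam_comm, map_smul, ← lam_comm a f, ha f hf, smul_zero]

/-!
The Macaulay pairing restricted to `R_m` is nondegenerate, the monomials of weight `m` being an
orthonormal basis, and `R_m` is finite-dimensional because the grading is pointed. As `I` is graded
and `λ_p` for `p ∈ R_m` only sees the degree-`m` component of its argument, `λ_p` vanishes on `I`
iff it vanishes on `R_m ∩ I`. So `D_0^m(I)` is the orthogonal complement of `R_m ∩ I` in `R_m`.
-/

lemma Module.finite_weightedHomogeneousSubmodule {σ M R : Type*} [AddCommMonoid M]
    [CommSemiring R] (w : σ → M) {m : M} (h : {d : σ →₀ ℕ | Finsupp.weight w d = m}.Finite) :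
    Module.Finite R (weightedHomogeneousSubmodule R w m) := by
  have := h.to_subtype
  rw [weightedHomogeneousSubmodule_eq_finsupp_supported]
  exact Module.Finite.of_basis (basisRestrictSupport R _)

lemma Submodule.finrank_comap_subtype {K V : Type*} [Ring K] [AddCommGroup V] [Module K V]
    (p q : Submodule K V) : Module.finrank K (q.comap p.subtype) = Module.finrank K ↥(p ⊓ q) := by
  rw [← Submodule.finrank_map_subtype_eq, Submodule.map_comap_subtype]

section Macaulay

variable {N : ℕ}

lemma IsMGraded.weightedHomogeneousComponent_mem {M : Type*} [AddCommGroup M]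
    {w : Fin N → M} {I : Ideal (MvPolynomial (Fin N) ℂ)} (hI : IsMGraded w I)
    {f : MvPolynomial (Fin N) ℂ} (hf : f ∈ I) (m : M) :
    weightedHomogeneousComponent w m f ∈ I := by
  classical
  let := weightedGradedAlgebra ℂ w
  obtain ⟨S, hS, rfl⟩ := hI
  refine weightedHomogeneousComponent_mem_of_mem ℂ w
    (Ideal.homogeneous_span _ S fun s hs => ?_) hf m
  obtain ⟨n, hn⟩ := hS s hs
  exact ⟨n, hn⟩

lemma lam_apply (p f : MvPolynomial (Fin N) ℂ) :
    lam p f = ∑ α ∈ p.support, coeff α p * coeff α f := rfl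

lemma lam_monomial_one_right (p : MvPolynomial (Fin N) ℂ) (α : Fin N →₀ ℕ) :
    lam p (monomial α 1) = coeff α p := by
  classical
  simp [lam_apply, coeff_monomial, eq_comm]

lemma lam_weightedHomogeneousComponent {M : Type*} [AddCommMonoid M] {w : Fin N → M} {m : M}
    {p : MvPolynomial (Fin N) ℂ} (hp : p.IsWeightedHomogeneous w m) (f : MvPolynomial (Fin N) ℂ) :
    lam p (weightedHomogeneousComponent w m f) = lam p f := by
  classical
  refine Finset.sum_congr rfl fun α hα => ?_
  rw [coeff_weightedHomogeneousComponent, if_pos (hp (mem_support_iff.mp hα))]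

lemma mem_vanishSub_iff_of_isWeightedHomogeneous {M : Type*} [AddCommGroup M] {w : Fin N → M}
    {m : M} {I : Ideal (MvPolynomial (Fin N) ℂ)} (hI : IsMGraded w I)
    {p : MvPolynomial (Fin N) ℂ} (hp : p.IsWeightedHomogeneous w m) :
    p ∈ vanishSub I ↔ ∀ f ∈ I, f.IsWeightedHomogeneous w m → lam p f = 0 := by
  refine ⟨fun h f hf _ => h f hf, fun h f hf => ?_⟩
  rw [← lam_weightedHomogeneousComponent hp]
  exact h _ (hI.weightedHomogeneousComponent_mem hf m)
    (weightedHomogeneousComponent_isWeightedHomogeneous m f)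

noncomputable def macaulayForm : LinearMap.BilinForm ℂ (MvPolynomial (Fin N) ℂ) :=
  LinearMap.mk₂ ℂ (fun p f => lam p f)
    (fun p q f => by simp only [lam_comm _ f, map_add])
    (fun c p f => by simp only [lam_comm _ f, map_smul])
    (fun p f g => map_add _ _ _)
    (fun c p f => map_smul _ _ _)

@[simp]
lemma macaulayForm_apply (p f : MvPolynomial (Fin N) ℂ) : macaulayForm p f = lam p f := rfl

lemma macaulayForm_restrict_isRefl (V : Submodule ℂ (MvPolynomial (Fin N) ℂ)) :
    (macaulayForm.restrict V).IsRefl := fun p f h => by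
  simpa [lam_comm] using h

lemma macaulayForm_restrict_weightedHomogeneousSubmodule_nondegenerate {M : Type*}
    [AddCommMonoid M] (w : Fin N → M) (m : M) :
    (macaulayForm.restrict (weightedHomogeneousSubmodule ℂ w m)).Nondegenerate := by
  refine (macaulayForm_restrict_isRefl _).nondegenerate_iff_separatingLeft.mpr fun p hp => ?_
  ext1
  ext α
  by_cases hα : Finsupp.weight w α = m
  · simpa [lam_monomial_one_right] using
      hp ⟨monomial α 1, isWeightedHomogeneous_monomial w α 1 hα⟩
  · simp only [Submodule.coe_zero, coeff_zero]
    by_contra h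
    exact hα (p.2 h)

lemma comap_vanishSub_eq_orthogonal {M : Type*} [AddCommGroup M] {w : Fin N → M}
    {I : Ideal (MvPolynomial (Fin N) ℂ)} (hI : IsMGraded w I) (m : M) :
    (vanishSub I).comap (weightedHomogeneousSubmodule ℂ w m).subtype =
      (macaulayForm.restrict _).orthogonal
        ((I.restrictScalars ℂ).comap (weightedHomogeneousSubmodule ℂ w m).subtype) := by
  ext p
  simp only [Submodule.mem_comap, Submodule.subtype_apply,
    mem_vanishSub_iff_of_isWeightedHomogeneous hI p.2, LinearMap.BilinForm.mem_orthogonal_iff]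
  refine ⟨fun h f hf => ?_, fun h f hf hfm => ?_⟩
  · simpa [lam_comm] using h f hf f.2
  · simpa [lam_comm] using h ⟨f, hfm⟩ hf

end Macaulay

/-- **Prop. 3.1**: for a pointed `M`-grading and an `M`-graded ideal `I`, the multi-graded
Hilbert function of `I` equals the dimension of the degree-`m` Macaulay dual space:
`dim R_m − dim (R_m ∩ I) = dim D_0^m(I)`. -/
theorem hilbertFunction_eq_finrank_dualSpace {N : ℕ} {M : Type*} [AddCommGroup M]
    (w : Fin N → M)
    (hpointed : ∀ m : M, {α : Fin N →₀ ℕ | Finsupp.weight w α = m}.Finite)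
    (I : Ideal (MvPolynomial (Fin N) ℂ)) (hI : IsMGraded w I) (m : M) :
    Module.finrank ℂ ↥(weightedHomogeneousSubmodule ℂ w m)
      - Module.finrank ℂ ↥(weightedHomogeneousSubmodule ℂ w m ⊓ I.restrictScalars ℂ)
      = Module.finrank ℂ ↥(weightedHomogeneousSubmodule ℂ w m ⊓ vanishSub I) := by
  have := Module.finite_weightedHomogeneousSubmodule (R := ℂ) w (hpointed m)
  rw [← Submodule.finrank_comap_subtype, ← Submodule.finrank_comap_subtype,
    comap_vanishSub_eq_orthogonal hI m, LinearMap.BilinForm.finrank_orthogonal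
      (macaulayForm_restrict_weightedHomogeneousSubmodule_nondegenerate w m)]
end

section
/- Let I = Ideal.span {f_1, …, f_t} ⊆ R = MvPolynomial (Fin N) ℂ where each f_i is M-homogeneous of degree d_i, let m ∈ M, and let p ∈ R be M-homogeneous of degree m. Then λ_p vanishes on I if and only if both: (i) for every 1 ≤ j ≤ N the functional Φ_j(λ_p) : f ↦ λ_p(x_j·f) vanishes on I (the closedness subspace condition), and (ii) λ_p(f_i) = 0 for every i with d_i = m. -/
/-!
If `λ_p` kills `x_j I` for every `j`, then it kills `r f_i` whenever `r` has no constant term,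
since such an `r` is a combination `∑ c_j x_j`. Writing an arbitrary `r` as
`r(0) + (r - r(0))`, it remains to see `λ_p(f_i) = 0`: this is hypothesis (ii) when
`d_i = m`, and otherwise `p` and `f_i` have disjoint supports, being homogeneous of different
degrees. As `I` is spanned by the `r f_i`, `λ_p` vanishes on `I`.
-/

open MvPolynomial

namespace MvPolynomial

variable {σ R : Type*} [CommRing R]

lemma sub_C_constantCoeff_mem_idealOfVars (r : MvPolynomial σ R) :
    r - C (constantCoeff r) ∈ idealOfVars σ R := by
  rw [← pow_one (idealOfVars σ R), mem_pow_idealOfVars_iff']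
  intro x hx
  obtain rfl : x = 0 := by simpa [Finsupp.degree_eq_zero_iff] using hx
  simp [constantCoeff_eq]

lemma map_mul_eq_zero_of_forall_X_mul [Fintype σ] {F V : Type*} [AddCommMonoid V]
    [FunLike F (MvPolynomial σ R) V] [AddMonoidHomClass F (MvPolynomial σ R) V] (φ : F)
    {I : Ideal (MvPolynomial σ R)} (hX : ∀ j, ∀ g ∈ I, φ (X j * g) = 0)
    {r g : MvPolynomial σ R} (hr : r ∈ idealOfVars σ R) (hg : g ∈ I) : φ (r * g) = 0 := by
  obtain ⟨c, rfl⟩ := Ideal.mem_span_range_iff_exists_fun.mp hr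
  simp only [Finset.sum_mul, map_sum, mul_comm (c _), mul_assoc]
  exact Finset.sum_eq_zero fun j _ => hX j _ (I.mul_mem_right (c j) hg)

end MvPolynomial

lemma lam_eq_zero_of_isWeightedHomogeneous_of_ne {N : ℕ} {M : Type*} [AddCommMonoid M]
    {w : Fin N → M} {m d : M} {p q : MvPolynomial (Fin N) ℂ}
    (hp : p.IsWeightedHomogeneous w m) (hq : q.IsWeightedHomogeneous w d) (hdm : d ≠ m) :
    lam p q = 0 := by
  refine Finset.sum_eq_zero fun α hα => ?_
  have hqα : coeff α q = 0 := by
    by_contra h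
    exact hdm ((hq h).symm.trans (hp (mem_support_iff.mp hα)))
  rw [hqα, mul_zero]

/-- **Cor. 3.1 (closedness subspace condition, multi-graded case)**: for
`I = ⟨f₁,…,f_t⟩` with each `f_i` `M`-homogeneous of degree `d_i`, and `p`
`M`-homogeneous of degree `m`, the functional `λ_p` vanishes on `I` iff
(i) each `Φ_j(λ_p) : f ↦ λ_p(x_j·f)` vanishes on `I`, and
(ii) `λ_p(f_i) = 0` for every `i` with `d_i = m`. -/
theorem multigraded_closedness_condition {N t : ℕ} {M : Type*} [AddCommGroup M]
    (w : Fin N → M)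
    (f : Fin t → MvPolynomial (Fin N) ℂ) (d : Fin t → M)
    (hf : ∀ i, (f i).IsWeightedHomogeneous w (d i))
    (I : Ideal (MvPolynomial (Fin N) ℂ)) (hI : I = Ideal.span (Set.range f))
    (m : M) (p : MvPolynomial (Fin N) ℂ) (hp : p.IsWeightedHomogeneous w m) :
    (∀ g ∈ I, lam p g = 0) ↔
      ((∀ j : Fin N, ∀ g ∈ I, lam p (X j * g) = 0) ∧
        ∀ i : Fin t, d i = m → lam p (f i) = 0) := by
  have hfI : ∀ i, f i ∈ I := fun i => hI ▸ Ideal.subset_span ⟨i, rfl⟩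
  refine ⟨fun h => ⟨fun j g hg => h _ (I.mul_mem_left _ hg), fun i _ => h _ (hfI i)⟩, ?_⟩
  rintro ⟨hX, hdeg⟩ g hg
  have hgen : ∀ i, lam p (f i) = 0 := fun i => by
    rcases eq_or_ne (d i) m with h | h
    · exact hdeg i h
    · exact lam_eq_zero_of_isWeightedHomogeneous_of_ne hp (hf i) h
  have hmul : ∀ i r, lam p (r * f i) = 0 := fun i r => by
    calc lam p (r * f i)
        = constantCoeff r • lam p (f i) + lam p ((r - C (constantCoeff r)) * f i) := by
          rw [← map_smul, ← map_add, smul_eq_C_mul, ← add_mul, add_sub_cancel]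
      _ = 0 := by
          rw [hgen, smul_zero, zero_add, map_mul_eq_zero_of_forall_X_mul _ hX
            (sub_C_constantCoeff_mem_idealOfVars r) (hfI i)]
  obtain ⟨r, rfl⟩ := Ideal.mem_span_range_iff_exists_fun.mp (hI ▸ hg)
  rw [map_sum]
  exact Finset.sum_eq_zero fun i _ => hmul i (r i)
end

section
/- Suppose the M-grading of R = MvPolynomial (Fin N) ℂ is pointed, let I ⊆ R be an M-graded ideal, let m ∈ M, and let g ∈ R be M-homogeneous of degree m. Then g ∈ I if and only if λ_p(g) = 0 for every M-homogeneous polynomial p of degree m such that λ_p vanishes on I, i.e. g ∈ I if and only if ∂(g) = 0 for all ∂ ∈ D_0^m(I). -/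
open MvPolynomial

/-!
An ideal generated by homogeneous elements contains the degree-`m` component `f_m` of each of
its elements, so `λ_p(f) = φ(f_m)` vanishes on `I` whenever `φ` does. If `g ∉ I`, pick a linear
functional `φ` vanishing on `I` with `φ(g) ≠ 0`; pointedness makes
`p = ∑_{weight α = m} φ(X^α) X^α` a polynomial, homogeneous of degree `m`, with
`λ_p(f) = φ(f_m)`. Then `λ_p` vanishes on `I` while `λ_p(g) = φ(g) ≠ 0`.
-/

namespace MvPolynomial

section WeightedComponent

variable {σ R M : Type*} [CommSemiring R] [AddCommMonoid M] [DecidableEq M] {w : σ → M}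

theorem weightedHomogeneousComponent_mem_span {S : Set (MvPolynomial σ R)}
    (hS : ∀ s ∈ S, ∃ m, s.IsWeightedHomogeneous w m) {f : MvPolynomial σ R}
    (hf : f ∈ Ideal.span S) (m : M) :
    weightedHomogeneousComponent w m f ∈ Ideal.span S := by
  let _ := weightedGradedAlgebra R w
  have hhom : (Ideal.span S).IsHomogeneous (weightedHomogeneousSubmodule R w) :=
    Ideal.homogeneous_span _ S fun s hs =>
      (hS s hs).imp fun n hn => (mem_weightedHomogeneousSubmodule R w n s).mpr hn
  rw [← decompose'_apply R w f m]
  exact hhom m hf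

theorem weightedHomogeneousComponent_eq_sum {A : Finset (σ →₀ ℕ)} {m : M}
    (hA : ∀ d, d ∈ A ↔ Finsupp.weight w d = m) (f : MvPolynomial σ R) :
    weightedHomogeneousComponent w m f = ∑ d ∈ A, monomial d (coeff d f) := by
  classical
  ext d
  simp only [coeff_weightedHomogeneousComponent, coeff_sum, coeff_monomial,
    Finset.sum_ite_eq', hA]

end WeightedComponent

section DualPolynomial

variable {σ R : Type*} [CommSemiring R]

noncomputable def dualPolynomial (A : Finset (σ →₀ ℕ)) (φ : MvPolynomial σ R →ₗ[R] R) :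
    MvPolynomial σ R :=
  ∑ d ∈ A, monomial d (φ (monomial d 1))

variable {A : Finset (σ →₀ ℕ)} (φ : MvPolynomial σ R →ₗ[R] R)

theorem coeff_dualPolynomial_of_mem {d : σ →₀ ℕ} (hd : d ∈ A) :
    coeff d (dualPolynomial A φ) = φ (monomial d 1) := by
  classical
  simp only [dualPolynomial, coeff_sum, coeff_monomial, Finset.sum_ite_eq', if_pos hd]

theorem support_dualPolynomial_subset : (dualPolynomial A φ).support ⊆ A := by
  classical
  exact support_sum.trans <| Finset.biUnion_subset.mpr fun _ hd =>
    support_monomial_subset.trans (Finset.singleton_subset_iff.mpr hd)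

theorem isWeightedHomogeneous_dualPolynomial {M : Type*} [AddCommMonoid M] {w : σ → M}
    {m : M} (hA : ∀ d ∈ A, Finsupp.weight w d = m) :
    (dualPolynomial A φ).IsWeightedHomogeneous w m :=
  IsWeightedHomogeneous.sum _ _ m fun d hd => isWeightedHomogeneous_monomial w d _ (hA d hd)

end DualPolynomial

end MvPolynomial

theorem lam_dualPolynomial {N : ℕ} (A : Finset (Fin N →₀ ℕ))
    (φ : MvPolynomial (Fin N) ℂ →ₗ[ℂ] ℂ) (f : MvPolynomial (Fin N) ℂ) :
    lam (dualPolynomial A φ) f = φ (∑ d ∈ A, monomial d (coeff d f)) := by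
  have hsum : lam (dualPolynomial A φ) f = ∑ d ∈ A, coeff d (dualPolynomial A φ) * coeff d f :=
    Finset.sum_subset (support_dualPolynomial_subset φ) fun d _ hd => by
      rw [notMem_support_iff.mp hd, zero_mul]
  rw [hsum, map_sum]
  refine Finset.sum_congr rfl fun d hd => ?_
  rw [coeff_dualPolynomial_of_mem φ hd, mul_comm, ← smul_eq_mul, ← map_smul, smul_monomial,
    smul_eq_mul, mul_one]

/-- **Ideal membership test (Cor. 4.1)**: for a pointed `M`-grading, an `M`-graded ideal
`I`, and `g` `M`-homogeneous of degree `m`, one has `g ∈ I` iff `∂(g) = 0` for all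
`∂ ∈ D_0^m(I)`, i.e. iff `λ_p(g) = 0` for every `M`-homogeneous `p` of degree `m`
such that `λ_p` vanishes on `I`. -/
theorem ideal_membership_test {N : ℕ} {M : Type*} [AddCommGroup M] (w : Fin N → M)
    (hpointed : ∀ m : M, {α : Fin N →₀ ℕ | Finsupp.weight w α = m}.Finite)
    (I : Ideal (MvPolynomial (Fin N) ℂ)) (hI : IsMGraded w I)
    (m : M) (g : MvPolynomial (Fin N) ℂ) (hg : g.IsWeightedHomogeneous w m) :
    g ∈ I ↔ ∀ p : MvPolynomial (Fin N) ℂ, p.IsWeightedHomogeneous w m →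
      (∀ f ∈ I, lam p f = 0) → lam p g = 0 := by
  classical
  refine ⟨fun hgI p _ hp => hp g hgI, fun h => ?_⟩
  by_contra hgI
  obtain ⟨S, hS, rfl⟩ := hI
  obtain ⟨φ, hφg, hφI⟩ := Submodule.exists_dual_map_eq_bot_of_notMem
    (p := (Ideal.span S).restrictScalars ℂ) hgI inferInstance
  set A := (hpointed m).toFinset
  have hA (d : Fin N →₀ ℕ) : d ∈ A ↔ Finsupp.weight w d = m := Set.Finite.mem_toFinset _
  have hlam (f : MvPolynomial (Fin N) ℂ) :
      lam (dualPolynomial A φ) f = φ (weightedHomogeneousComponent w m f) := by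
    rw [lam_dualPolynomial, weightedHomogeneousComponent_eq_sum hA]
  refine hφg ?_
  rw [← hg.weightedHomogeneousComponent_same, ← hlam]
  refine h _ (isWeightedHomogeneous_dualPolynomial φ fun d => (hA d).mp) fun f hf => ?_
  rw [hlam]
  exact LinearMap.le_ker_iff_map.mpr hφI (weightedHomogeneousComponent_mem_span hS hf m)
end

section
/- Suppose the M-grading of R = MvPolynomial (Fin N) ℂ is pointed and let I, J ⊆ R be M-graded ideals. Then I ⊆ J if and only if for every m ∈ M, D_0^m(J) ⊆ D_0^m(I); explicitly, I ⊆ J if and only if for every m ∈ M and every M-homogeneous polynomial p of degree m with λ_p vanishing on J, λ_p also vanishes on I. -/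
set_option synthInstance.maxHeartbeats 1000000
set_option maxHeartbeats 1000000


open MvPolynomial

/-- Homogeneous components of elements of an `M`-graded ideal stay in the ideal. -/
lemma mgraded_component_mem {N : ℕ} {M : Type*} [AddCommGroup M] (w : Fin N → M)
    {J : Ideal (MvPolynomial (Fin N) ℂ)} (hJ : IsMGraded w J)
    {f : MvPolynomial (Fin N) ℂ} (hf : f ∈ J) (m : M) :
    weightedHomogeneousComponent w m f ∈ J := by
  classical
  letI := weightedGradedAlgebra ℂ w
  obtain ⟨S, hS, rfl⟩ := hJ
  have h : (Ideal.span S).IsHomogeneous (weightedHomogeneousSubmodule ℂ w) :=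
    Ideal.homogeneous_span _ S fun x hx => by
      obtain ⟨m', hm'⟩ := hS x hx
      exact ⟨m', (mem_weightedHomogeneousSubmodule _ _ _ _).2 hm'⟩
  have h2 := h m hf
  rwa [← DirectSum.Decomposition.decompose'_eq, weightedDecomposition.decompose'_apply] at h2

/-- `lam` over any finset containing the support. -/
lemma lam_eq_sum {N : ℕ} (p f : MvPolynomial (Fin N) ℂ) {B : Finset (Fin N →₀ ℕ)}
    (hB : p.support ⊆ B) : lam p f = ∑ α ∈ B, coeff α p * coeff α f := by
  refine Finset.sum_subset hB fun α _ hα => ?_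
  rw [notMem_support_iff.mp hα, zero_mul]

/-- **Cor. 4.2(1)**: for a pointed `M`-grading and `M`-graded ideals `I, J`,
`I ⊆ J` iff `D_0^m(J) ⊆ D_0^m(I)` for every `m ∈ M`, i.e. iff every `M`-homogeneous
`p` of degree `m` whose functional `λ_p` vanishes on `J` also vanishes on `I`. -/
theorem ideal_inclusion_iff_dualSpace_inclusion {N : ℕ} {M : Type*} [AddCommGroup M]
    (w : Fin N → M)
    (hpointed : ∀ m : M, {α : Fin N →₀ ℕ | Finsupp.weight w α = m}.Finite)
    (I J : Ideal (MvPolynomial (Fin N) ℂ)) (hI : IsMGraded w I) (hJ : IsMGraded w J) :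
    I ≤ J ↔ ∀ m : M, ∀ p : MvPolynomial (Fin N) ℂ, p.IsWeightedHomogeneous w m →
      (∀ f ∈ J, lam p f = 0) → (∀ f ∈ I, lam p f = 0) := by
  classical
  constructor
  · intro h m p _ hJ0 f hf
    exact hJ0 f (h hf)
  · intro H
    obtain ⟨S, hS, rfl⟩ := hI
    rw [Ideal.span_le]
    intro s hsS
    obtain ⟨m, hm⟩ := hS s hsS
    by_contra hsJ
    -- a functional vanishing on J but not at s
    set W : Submodule ℂ (MvPolynomial (Fin N) ℂ) := J.restrictScalars ℂ with hW
    have hmk : (Submodule.Quotient.mk s : MvPolynomial (Fin N) ℂ ⧸ W) ≠ 0 := by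
      simpa [Submodule.Quotient.mk_eq_zero, hW] using hsJ
    have hex : ∃ φ0 : Module.Dual ℂ (MvPolynomial (Fin N) ℂ ⧸ W),
        φ0 (Submodule.Quotient.mk s) ≠ 0 := by
      by_contra hall
      push_neg at hall
      exact hmk ((Module.forall_dual_apply_eq_zero_iff ℂ _).mp hall)
    obtain ⟨φ0, hφ0⟩ := hex
    set φ : MvPolynomial (Fin N) ℂ →ₗ[ℂ] ℂ := φ0 ∘ₗ W.mkQ with hφdef
    have hφJ : ∀ g ∈ J, φ g = 0 := by
      intro g hg
      have : W.mkQ g = 0 := (Submodule.Quotient.mk_eq_zero W).mpr hg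
      simp [hφdef, this]
    -- build p
    set A : Finset (Fin N →₀ ℕ) := (hpointed m).toFinset with hA
    have hmemA : ∀ α : Fin N →₀ ℕ, α ∈ A ↔ Finsupp.weight w α = m := by
      intro α; simp [hA, Set.Finite.mem_toFinset]
    set p : MvPolynomial (Fin N) ℂ :=
      ∑ α ∈ A, monomial α (φ (monomial α 1)) with hp
    have hcoeffp : ∀ α : Fin N →₀ ℕ,
        coeff α p = if α ∈ A then φ (monomial α 1) else 0 := by
      intro α
      rw [hp, MvPolynomial.coeff_sum]
      simp only [coeff_monomial]
      rw [Finset.sum_ite_eq' A α (fun β => φ (monomial β 1))]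
    have hsupp : p.support ⊆ A := by
      intro α hα
      by_contra hαA
      rw [mem_support_iff, hcoeffp, if_neg hαA] at hα
      exact hα rfl
    have hphom : p.IsWeightedHomogeneous w m := by
      rw [hp]
      apply IsWeightedHomogeneous.sum
      intro α hα
      exact isWeightedHomogeneous_monomial _ _ _ ((hmemA α).mp hα)
    -- key identity : lam p f = φ (component m f)
    have key : ∀ f : MvPolynomial (Fin N) ℂ,
        lam p f = φ (weightedHomogeneousComponent w m f) := by
      intro f
      have hsuppc : (weightedHomogeneousComponent w m f).support ⊆ A := by
        intro α hα
        rw [mem_support_iff, coeff_weightedHomogeneousComponent] at hα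
        rw [hmemA]
        by_contra hne
        rw [if_neg hne] at hα
        exact hα rfl
      have hrepr : weightedHomogeneousComponent w m f =
          ∑ α ∈ A, monomial α (coeff α (weightedHomogeneousComponent w m f)) := by
        conv_lhs => rw [(weightedHomogeneousComponent w m f).as_sum]
        refine Finset.sum_subset hsuppc fun α _ hα => ?_
        rw [notMem_support_iff.mp hα, map_zero]
      rw [lam_eq_sum p f hsupp, hrepr, map_sum]
      refine Finset.sum_congr rfl fun α hα => ?_
      rw [hcoeffp, if_pos hα, coeff_weightedHomogeneousComponent, if_pos ((hmemA α).mp hα)]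
      have : (monomial α (coeff α f) : MvPolynomial (Fin N) ℂ)
          = coeff α f • monomial α 1 := by
        rw [MvPolynomial.smul_monomial, smul_eq_mul, mul_one]
      rw [this, map_smul, smul_eq_mul, mul_comm]
    -- lam p vanishes on J
    have hvanJ : ∀ f ∈ J, lam p f = 0 := by
      intro f hf
      rw [key f]
      exact hφJ _ (mgraded_component_mem w hJ hf m)
    -- hence on I, in particular at s
    have hs : lam p s = 0 := H m p hphom hvanJ s (Ideal.subset_span hsS)
    rw [key s, hm.weightedHomogeneousComponent_same] at hs
    exact hφ0 hs
end

section
/- Let g ∈ R = MvPolynomial (Fin N) ℂ be a nonzero M-homogeneous polynomial. Then the operator Φ_g on the Macaulay dual space D_0 defined by Φ_g(∂)(f) = ∂(g·f) admits a linear right inverse: there exists a ℂ-linear map Ψ : R →ₗ[ℂ] R such that for all p, f ∈ R, λ_{Ψ(p)}(g·f) = λ_p(f), i.e. Φ_g ∘ Ψ_g is the identity on D_0. -/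
open MvPolynomial

/-!
With respect to the Macaulay pairing, multiplication by `g` has an explicit adjoint, the
contraction `q ↦ g ⌟ q` with `coeff β (g ⌟ q) = ∑ γ, g_γ q_{γ+β}`, so it suffices that contraction
by `g ≠ 0` is surjective; a linear right inverse then exists over a field. Surjectivity is a
triangularity argument for a monomial order: if `γ₀` is the smallest exponent of `g`, then
`g ⌟ x^{α+γ₀}` has leading term `g_{γ₀} x^α`, and a subspace containing a polynomial of each
leading exponent, with invertible leading coefficient, is everything.
-/

namespace MonomialOrder

variable {σ R : Type*} (m : MonomialOrder σ)

lemma degree_eq_of_forall_le [CommSemiring R] {p : MvPolynomial σ R} {α : σ →₀ ℕ}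
    (hα : coeff α p ≠ 0) (hle : ∀ δ ∈ p.support, δ ≼[m] α) : m.degree p = α :=
  m.toSyn.injective <|
    le_antisymm (m.degree_le_iff.mpr hle) (m.le_degree (mem_support_iff.mpr hα))

variable [CommRing R]

lemma degree_sub_smul_lt {p q : MvPolynomial σ R} {c : R} (hdeg : m.degree q = m.degree p)
    (hc : c * m.leadingCoeff q = m.leadingCoeff p) (hne : p - c • q ≠ 0) :
    m.degree (p - c • q) ≺[m] m.degree p := by
  have hle : m.degree (p - c • q) ≼[m] m.degree p :=
    m.degree_sub_le.trans (max_le le_rfl (m.degree_smul_le.trans (congrArg _ hdeg).le))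
  refine hle.lt_of_ne fun heq => ?_
  have hcoeff : coeff (m.degree p) (p - c • q) = 0 := by
    rw [coeff_sub, coeff_smul, ← hdeg, smul_eq_mul, ← leadingCoeff, hc, hdeg, leadingCoeff,
      sub_self]
  exact m.coeff_degree_ne_zero_iff.mpr hne (m.toSyn.injective heq ▸ hcoeff)

theorem eq_top_of_forall_exists_degree (S : Submodule R (MvPolynomial σ R))
    (hS : ∀ α, ∃ q ∈ S, m.degree q = α ∧ IsUnit (m.leadingCoeff q)) : S = ⊤ := by
  suffices h : ∀ a, ∀ p : MvPolynomial σ R, m.toSyn (m.degree p) = a → p ∈ S from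
    Submodule.eq_top_iff'.mpr fun p => h _ p rfl
  intro a
  induction a using WellFoundedLT.induction with
  | _ a IH =>
  rintro p rfl
  obtain ⟨q, hqS, hqdeg, hqlc⟩ := hS (m.degree p)
  set c := ↑hqlc.unit⁻¹ * m.leadingCoeff p
  have hc : c * m.leadingCoeff q = m.leadingCoeff p := by
    rw [mul_right_comm, IsUnit.val_inv_mul, one_mul]
  have hr : p - c • q ∈ S := by
    by_cases hne : p - c • q = 0
    · exact hne ▸ S.zero_mem
    · exact IH _ (m.degree_sub_smul_lt hqdeg hc hne) _ rfl
  simpa using S.add_mem hr (S.smul_mem c hqS)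

end MonomialOrder

namespace MvPolynomial

open scoped MonomialOrder

variable {σ R : Type*}

/-- Contraction `g ⌟ q`, the adjoint of multiplication by `g` for the Macaulay pairing. -/
noncomputable def contract [CommSemiring R] (g : MvPolynomial σ R) :
    MvPolynomial σ R →ₗ[R] MvPolynomial σ R where
  toFun q := ∑ γ ∈ g.support, coeff γ g • q.divMonomial γ
  map_add' q r := by
    ext β
    simp [coeff_sum, mul_add, Finset.sum_add_distrib]
  map_smul' c q := by
    ext β
    simp [coeff_sum, Finset.mul_sum, mul_left_comm]

lemma coeff_contract [CommSemiring R] (g q : MvPolynomial σ R) (β : σ →₀ ℕ) :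
    coeff β (contract g q) = ∑ γ ∈ g.support, coeff γ g * coeff (γ + β) q := by
  simp [contract, coeff_sum]

lemma coeff_contract_monomial_add [CommSemiring R] (g : MvPolynomial σ R) (α γ₀ : σ →₀ ℕ) :
    coeff α (contract g (monomial (α + γ₀) 1)) = coeff γ₀ g := by
  classical
  simp [coeff_contract, coeff_monomial, add_comm α γ₀, eq_comm]

lemma support_contract_monomial_add_le [CommSemiring R] (m : MonomialOrder σ)
    {g : MvPolynomial σ R} {γ₀ : σ →₀ ℕ} (hmin : ∀ γ ∈ g.support, γ₀ ≼[m] γ) (α : σ →₀ ℕ) :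
    ∀ δ ∈ (contract g (monomial (α + γ₀) 1)).support, δ ≼[m] α := by
  classical
  intro δ hδ
  rw [mem_support_iff, coeff_contract] at hδ
  obtain ⟨γ, hγ, hne⟩ := Finset.exists_ne_zero_of_sum_ne_zero hδ
  have hsum : γ + δ = α + γ₀ := by
    by_contra h
    simp [coeff_monomial, Ne.symm h] at hne
  refine le_of_add_le_add_right (a := m.toSyn γ₀) ?_
  calc m.toSyn δ + m.toSyn γ₀ ≤ m.toSyn δ + m.toSyn γ := add_le_add_right (hmin γ hγ) _
    _ = m.toSyn α + m.toSyn γ₀ := by rw [← map_add, ← map_add, add_comm δ, hsum]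

theorem range_contract_eq_top [Field R] [LinearOrder σ] [WellFoundedGT σ]
    {g : MvPolynomial σ R} (hg : g ≠ 0) : LinearMap.range (contract g) = ⊤ := by
  let m : MonomialOrder σ := MonomialOrder.lex
  obtain ⟨γ₀, hγ₀, hmin⟩ := g.support.exists_min_image m.toSyn (support_nonempty.mpr hg)
  have hgγ₀ : coeff γ₀ g ≠ 0 := mem_support_iff.mp hγ₀
  refine m.eq_top_of_forall_exists_degree _ fun α =>
    ⟨contract g (monomial (α + γ₀) 1), ⟨_, rfl⟩, ?_⟩
  have hcoeff := coeff_contract_monomial_add g α γ₀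
  have hdeg : m.degree (contract g (monomial (α + γ₀) 1)) = α :=
    m.degree_eq_of_forall_le (hcoeff ▸ hgγ₀) (support_contract_monomial_add_le m hmin α)
  refine ⟨hdeg, ?_⟩
  rw [MonomialOrder.leadingCoeff, hdeg, hcoeff]
  exact hgγ₀.isUnit

end MvPolynomial

section MacaulayPairing

variable {N : ℕ}

lemma lam_monomial (p : MvPolynomial (Fin N) ℂ) (β : Fin N →₀ ℕ) (c : ℂ) :
    lam p (monomial β c) = c * coeff β p := by
  show ∑ α ∈ p.support, coeff α p * coeff α (monomial β c) = _
  simp [coeff_monomial, mul_comm, eq_comm]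
  exact Or.inr

lemma lam_mul (g q f : MvPolynomial (Fin N) ℂ) : lam q (g * f) = lam (contract g q) f := by
  suffices (lam q).comp (LinearMap.mulLeft ℂ g) = lam (contract g q) from
    LinearMap.congr_fun this f
  refine linearMap_ext fun β => LinearMap.ext_ring ?_
  simp only [LinearMap.comp_apply, LinearMap.mulLeft_apply, lam_monomial, one_mul,
    coeff_contract]
  conv_lhs => rw [g.as_sum, Finset.sum_mul, map_sum]
  simp only [monomial_mul, mul_one, lam_monomial]

end MacaulayPairing

theorem exists_right_inverse_of_contraction_general {N : ℕ} (g : MvPolynomial (Fin N) ℂ) (hg0 : g ≠ 0) :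
    ∃ Ψ : MvPolynomial (Fin N) ℂ →ₗ[ℂ] MvPolynomial (Fin N) ℂ,
      ∀ p f : MvPolynomial (Fin N) ℂ, lam (Ψ p) (g * f) = lam p f := by
  obtain ⟨Ψ, hΨ⟩ := (contract g).exists_rightInverse_of_surjective (range_contract_eq_top hg0)
  exact ⟨Ψ, fun p f => by rw [lam_mul, ← LinearMap.comp_apply, hΨ, LinearMap.id_apply]⟩

/-- **Lemma 4.3**: for a nonzero `M`-homogeneous `g`, the operator `Φ_g` on the Macaulay
dual space `D_0` defined by `Φ_g(λ_p)(f) = λ_p(g·f)` has a linear right inverse: there is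
a `ℂ`-linear `Ψ : R →ₗ[ℂ] R` with `λ_{Ψ(p)}(g·f) = λ_p(f)` for all `p, f`, i.e.
`Φ_g ∘ Ψ_g = id` on `D_0`. -/
theorem exists_right_inverse_of_contraction {N : ℕ} {M : Type*} [AddCommGroup M]
    (w : Fin N → M) (g : MvPolynomial (Fin N) ℂ) (hg0 : g ≠ 0)
    (d : M) (hg : g.IsWeightedHomogeneous w d) :
    ∃ Ψ : MvPolynomial (Fin N) ℂ →ₗ[ℂ] MvPolynomial (Fin N) ℂ,
      ∀ p f : MvPolynomial (Fin N) ℂ, lam (Ψ p) (g * f) = lam p f :=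
  exists_right_inverse_of_contraction_general g hg0
end
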